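/- For 0 ≤ r, s < 1, the supremum R(ab, r, s) of rot~(ρ(ab)) over representations ρ : F₂ → Homeo⁺(S¹)~ with rot~(ρ(a)) = r, rot~(ρ(b)) = s satisfies the lower bound R(ab, r, s) ≥ sup over all rationals p₁/q ≤ r and p₂/q ≤ s (same denominator q ≥ 1) of (p₁ + p₂ + 1)/q. -/

import Mathlib

/-!
Conjugating by the `q`-fold covering `x ↦ q * x` divides translation numbers by `q` and is
multiplicative, so it suffices to find lifts `A`, `B` with translation numbers `q * r`, `q * s`
and `A (B 0) = 0 + (⌊q * r⌋ + ⌊q * s⌋ + 1)`: then `0` is periodic for `A * B`, whose translation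
number is `⌊q * r⌋ + ⌊q * s⌋ + 1`. For every real `ρ` and point `x` there is a lift of translation
number `ρ` moving `x` to `x + ⌊ρ⌋ + 1/2`: up to integer and conjugating translations it is a
conjugate of the rotation by `fract ρ`, or for `fract ρ = 0` of a homeomorphism fixing `0`, by a
homeomorphism `t ↦ t ^ p` of `[0, 1)`. Composing two such lifts yields the extra `1`.
-/

/-- The translation number of a lift of an orientation-preserving circle homeomorphism. -/
noncomputable def rotZ (f : CircleDeg1Liftˣ) : ℝ :=
  (f : CircleDeg1Lift).translationNumber

/-- The generator `a` of the free group `F₂`. -/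
def genA : FreeGroup Bool := FreeGroup.of true

/-- The generator `b` of the free group `F₂`. -/
def genB : FreeGroup Bool := FreeGroup.of false

/-- `R(w,r,s)`: the supremum of `rot~(ρ w)` over all representations
`ρ : F₂ → Homeo⁺(S¹)~` with `rot~(ρ a) = r` and `rot~(ρ b) = s`. -/
noncomputable def RR (w : FreeGroup Bool) (r s : ℝ) : ℝ :=
  sSup { t : ℝ | ∃ ρ : FreeGroup Bool →* CircleDeg1Liftˣ,
    rotZ (ρ genA) = r ∧ rotZ (ρ genB) = s ∧ rotZ (ρ w) = t }

open Int Real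

lemma rpow_fract_mem_Ico (x : ℝ) {p : ℝ} (hp : 0 < p) : fract x ^ p ∈ Set.Ico (0 : ℝ) 1 :=
  ⟨rpow_nonneg (fract_nonneg x) p, rpow_lt_one (fract_nonneg x) (fract_lt_one x) hp⟩

lemma monotone_floor_add_rpow_fract {p : ℝ} (hp : 0 < p) :
    Monotone fun x : ℝ ↦ ⌊x⌋ + fract x ^ p := by
  intro x y hxy
  rcases (floor_mono hxy).eq_or_lt with hfl | hfl
  · have : fract x ≤ fract y := by rw [fract, fract, hfl]; linarith
    simp only [hfl]
    gcongr
  · have : (⌊x⌋ : ℝ) + 1 ≤ ⌊y⌋ := by exact_mod_cast hfl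
    linarith [(rpow_fract_mem_Ico x hp).2, (rpow_fract_mem_Ico y hp).1]

namespace CircleDeg1Lift

local notation "τ" => translationNumber

noncomputable def rpowFract (p : ℝ) (hp : 0 < p) : CircleDeg1Lift where
  toFun x := ⌊x⌋ + fract x ^ p
  monotone' := monotone_floor_add_rpow_fract hp
  map_add_one' x := by simp only [floor_add_one, fract_add_one]; push_cast; ring

section Rpow

variable {p : ℝ} (hp : 0 < p)

lemma rpowFract_apply (x : ℝ) : rpowFract p hp x = ⌊x⌋ + fract x ^ p := rfl

lemma rpowFract_apply_of_mem_Ico {x : ℝ} (hx : x ∈ Set.Ico (0 : ℝ) 1) :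
    rpowFract p hp x = x ^ p := by
  rw [rpowFract_apply, floor_eq_zero_iff.2 hx, fract_eq_self.2 hx, cast_zero, zero_add]

lemma rpowFract_mul_rpowFract {q : ℝ} (hq : 0 < q) (hpq : p * q = 1) :
    rpowFract p hp * rpowFract q hq = 1 := by
  ext x
  have hx := rpow_fract_mem_Ico x hq
  rw [mul_apply, rpowFract_apply, rpowFract_apply, floor_intCast_add, fract_intCast_add,
    floor_eq_zero_iff.2 hx, fract_eq_self.2 hx, ← rpow_mul (fract_nonneg x), mul_comm, hpq,
    rpow_one, add_zero, floor_add_fract, coe_one, id]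

noncomputable def rpowFractUnit : CircleDeg1Liftˣ where
  val := rpowFract p hp
  inv := rpowFract p⁻¹ (inv_pos.2 hp)
  val_inv := rpowFract_mul_rpowFract hp _ (mul_inv_cancel₀ hp.ne')
  inv_val := rpowFract_mul_rpowFract _ hp (inv_mul_cancel₀ hp.ne')

lemma exists_unit_map_zero_eq_zero_map_eq {a b : ℝ} (ha₀ : 0 < a) (ha₁ : a < 1) (hb₀ : 0 < b)
    (hb₁ : b < 1) : ∃ h : CircleDeg1Liftˣ, h 0 = 0 ∧ h a = b := by
  have hp : 0 < logb a b := logb_pos_of_base_lt_one ha₀ ha₁ hb₀ hb₁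
  refine ⟨rpowFractUnit hp, ?_, ?_⟩
  · exact (rpowFract_apply_of_mem_Ico hp ⟨le_rfl, one_pos⟩).trans (zero_rpow hp.ne')
  · exact (rpowFract_apply_of_mem_Ico hp ⟨ha₀.le, ha₁⟩).trans (rpow_logb ha₀ ha₁.ne hb₀)

end Rpow

lemma commute_translate_intCast (n : ℤ) (f : CircleDeg1Lift) :
    Commute (translate (Multiplicative.ofAdd (n : ℝ)) : CircleDeg1Lift) f :=
  ext fun x ↦ by simp only [mul_apply, translate_apply, map_int_add]

lemma exists_translationNumber_eq_map_zero_eq_half {ρ : ℝ} (hρ₀ : 0 ≤ ρ) (hρ₁ : ρ < 1) :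
    ∃ f : CircleDeg1Liftˣ, τ f = ρ ∧ f 0 = 1 / 2 := by
  rcases hρ₀.eq_or_lt with rfl | hρ₀
  · obtain ⟨h, h0, h1⟩ := exists_unit_map_zero_eq_zero_map_eq (a := 1 / 4) (b := 3 / 4)
      (by norm_num) (by norm_num) (by norm_num) (by norm_num)
    let T := translate (Multiplicative.ofAdd (1 / 4 : ℝ))
    refine ⟨T⁻¹ * h * T, ?_, ?_⟩
    · rw [Units.val_mul, Units.val_mul, translationNumber_conj_eq']
      simpa using translationNumber_of_eq_add_int (f := h) (x := 0) (m := 0) (by simpa using h0)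
    · rw [Units.val_mul, Units.val_mul, mul_apply, mul_apply, translate_apply, add_zero,
        translate_inv_apply, h1]
      norm_num
  · obtain ⟨h, h0, hρ⟩ := exists_unit_map_zero_eq_zero_map_eq hρ₀ hρ₁ one_half_pos one_half_lt_one
    refine ⟨h * translate (Multiplicative.ofAdd ρ) * h⁻¹, ?_, ?_⟩
    · rw [Units.val_mul, Units.val_mul, translationNumber_conj_eq, translationNumber_translate]
    · have : (h⁻¹ : CircleDeg1Liftˣ) 0 = 0 := by simpa [h0] using units_inv_apply_apply h 0
      simp [this, hρ]

lemma exists_translationNumber_eq_map_eq (ρ x : ℝ) :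
    ∃ f : CircleDeg1Liftˣ, τ f = ρ ∧ f x = x + ⌊ρ⌋ + 1 / 2 := by
  obtain ⟨g, hτg, hg0⟩ := exists_translationNumber_eq_map_zero_eq_half (fract_nonneg ρ)
    (fract_lt_one ρ)
  let T := translate (Multiplicative.ofAdd x)
  let N := translate (Multiplicative.ofAdd (⌊ρ⌋ : ℝ))
  refine ⟨T * (N * g) * T⁻¹, ?_, ?_⟩
  · rw [Units.val_mul, Units.val_mul, translationNumber_conj_eq, Units.val_mul,
      translationNumber_mul_of_commute (commute_translate_intCast _ _), translationNumber_translate,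
      hτg, floor_add_fract]
  · simp only [T, N, Units.val_mul, mul_apply, translate_apply, translate_inv_apply,
      neg_add_cancel, hg0]
    ring

lemma exists_translationNumber_mul_eq (r s : ℝ) :
    ∃ A B : CircleDeg1Liftˣ, τ A = r ∧ τ B = s ∧ τ ↑(A * B) = ⌊r⌋ + ⌊s⌋ + 1 := by
  obtain ⟨B, hτB, hB⟩ := exists_translationNumber_eq_map_eq s 0
  obtain ⟨A, hτA, hA⟩ := exists_translationNumber_eq_map_eq r (⌊s⌋ + 1 / 2)
  refine ⟨A, B, hτA, hτB, ?_⟩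
  have hAB : (A * B : CircleDeg1Liftˣ) 0 = 0 + ((⌊r⌋ + ⌊s⌋ + 1 : ℤ) : ℝ) := by
    rw [Units.val_mul, mul_apply, hB, zero_add, hA]
    push_cast
    ring
  exact_mod_cast translationNumber_of_eq_add_int _ hAB

section Scale

variable (q : ℕ) [NeZero q]

/-- Conjugation by the `q`-fold covering `x ↦ q * x`. -/
noncomputable def scale : CircleDeg1Lift →* CircleDeg1Lift where
  toFun f :=
    { toFun x := f (q * x) / q
      monotone' _ _ hxy := by dsimp only; gcongr
      map_add_one' x := by rw [mul_add, mul_one, map_add_nat, add_div, div_self (NeZero.ne _)] }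
  map_one' := ext fun x ↦ mul_div_cancel_left₀ x (NeZero.ne _)
  map_mul' f g := ext fun x ↦ by
    change _ = f (q * (g (q * x) / q)) / q
    rw [mul_div_cancel₀ _ (NeZero.ne _)]
    rfl

lemma scale_apply (f : CircleDeg1Lift) (x : ℝ) : scale q f x = f (q * x) / q := rfl

lemma translationNumber_scale (f : CircleDeg1Lift) : τ (scale q f) = τ f / q := by
  refine translationNumber_eq_of_tendsto₀ _ ?_
  refine (f.tendsto_translation_number₀.div_const (q : ℝ)).congr fun n ↦ ?_
  rw [← coe_pow, ← map_pow, scale_apply, mul_zero, div_right_comm]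

lemma exists_translationNumber_mul_eq_div (r s : ℝ) :
    ∃ A B : CircleDeg1Liftˣ, τ A = r ∧ τ B = s ∧ τ ↑(A * B) = (⌊q * r⌋ + ⌊q * s⌋ + 1) / q := by
  obtain ⟨A, B, hA, hB, hAB⟩ := exists_translationNumber_mul_eq (q * r) (q * s)
  have hq : (q : ℝ) ≠ 0 := NeZero.ne _
  refine ⟨Units.map (scale q) A, Units.map (scale q) B, ?_, ?_, ?_⟩
  · rw [Units.coe_map, translationNumber_scale, hA, mul_div_cancel_left₀ r hq]
  · rw [Units.coe_map, translationNumber_scale, hB, mul_div_cancel_left₀ s hq]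
  · rw [← map_mul, Units.coe_map, translationNumber_scale, hAB]

end Scale

lemma translationNumber_mul_le (f g : CircleDeg1Lift) : τ (f * g) ≤ τ f + τ g + 2 :=
  translationNumber_le_of_le_add _ fun x ↦ by
    rw [mul_apply]
    linarith [map_lt_add_translationNumber_add_one f (g x),
      map_lt_add_translationNumber_add_one g x]

end CircleDeg1Lift

lemma bddAbove_rotZ_mul (r s : ℝ) :
    BddAbove { t : ℝ | ∃ ρ : FreeGroup Bool →* CircleDeg1Liftˣ,
      rotZ (ρ genA) = r ∧ rotZ (ρ genB) = s ∧ rotZ (ρ (genA * genB)) = t } := by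
  refine ⟨r + s + 2, ?_⟩
  rintro _ ⟨ρ, hA, hB, rfl⟩
  rw [← hA, ← hB, rotZ, map_mul, Units.val_mul]
  exact CircleDeg1Lift.translationNumber_mul_le _ _

lemma exists_hom_rotZ_mul_eq (r s : ℝ) (q : ℕ) [NeZero q] :
    ∃ ρ : FreeGroup Bool →* CircleDeg1Liftˣ, rotZ (ρ genA) = r ∧ rotZ (ρ genB) = s ∧
      rotZ (ρ (genA * genB)) = (⌊q * r⌋ + ⌊q * s⌋ + 1) / q := by
  obtain ⟨A, B, hA, hB, hAB⟩ := CircleDeg1Lift.exists_translationNumber_mul_eq_div q r s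
  refine ⟨FreeGroup.lift fun i ↦ cond i A B, ?_, ?_, ?_⟩ <;>
    simpa [rotZ, genA, genB]

theorem RR_ab_ge_sup_general (r s : ℝ) :
    sSup { v : ℝ | ∃ (q : ℕ) (p₁ p₂ : ℤ), 1 ≤ q ∧
        (p₁ : ℝ) / q ≤ r ∧ (p₂ : ℝ) / q ≤ s ∧ v = ((p₁ : ℝ) + p₂ + 1) / q } ≤
      RR (genA * genB) r s := by
  refine csSup_le ⟨_, 1, ⌊r⌋, ⌊s⌋, le_rfl, by simpa using floor_le r, by simpa using floor_le s,
    rfl⟩ ?_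
  rintro _ ⟨q, p₁, p₂, hq, hp₁, hp₂, rfl⟩
  have : NeZero q := ⟨by omega⟩
  have hq' : (0 : ℝ) < q := by exact_mod_cast hq
  obtain ⟨ρ, hA, hB, hAB⟩ := exists_hom_rotZ_mul_eq r s q
  have h₁ : p₁ ≤ ⌊q * r⌋ := le_floor.2 ((div_le_iff₀' hq').1 hp₁)
  have h₂ : p₂ ≤ ⌊q * s⌋ := le_floor.2 ((div_le_iff₀' hq').1 hp₂)
  calc ((p₁ : ℝ) + p₂ + 1) / q ≤ (⌊q * r⌋ + ⌊q * s⌋ + 1) / q := by gcongr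
    _ = rotZ (ρ (genA * genB)) := hAB.symm
    _ ≤ RR (genA * genB) r s := le_csSup (bddAbove_rotZ_mul r s) ⟨ρ, hA, hB, rfl⟩

/-- The easy direction of the Jankins–Neumann/Naimi theorem: for `0 ≤ r, s < 1`,
`R(ab, r, s) ≥ sup { (p₁ + p₂ + 1)/q : p₁/q ≤ r, p₂/q ≤ s }`. -/
theorem RR_ab_ge_sup (r s : ℝ) (hr0 : 0 ≤ r) (hr1 : r < 1) (hs0 : 0 ≤ s) (hs1 : s < 1) :
    sSup { v : ℝ | ∃ (q : ℕ) (p₁ p₂ : ℤ), 1 ≤ q ∧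
        (p₁ : ℝ) / q ≤ r ∧ (p₂ : ℝ) / q ≤ s ∧ v = ((p₁ : ℝ) + p₂ + 1) / q } ≤
      RR (genA * genB) r s :=
  RR_ab_ge_sup_general r s
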